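/- Let (A[[ν]],⋆) be a formal deformation of A and H_ν := Z(A) + ν·A[[ν]]. Then: (a) for all A, B ∈ H_ν, A⋆B − B⋆A ∈ ν·H_ν; (b) ν·H_ν is a two-sided ideal of the algebra (H_ν,⋆): for A ∈ H_ν and C ∈ ν·H_ν, both A⋆C and C⋆A lie in ν·H_ν; and (c) for A ∈ H_ν and C ∈ ν·H_ν, A⋆C − C⋆A ∈ ν²·H_ν. Consequently the quotient H_ν/νH_ν, with product induced by ⋆ and bracket induced by (1/ν)[·,·]_⋆, is a commutative Poisson algebra. -/

import Mathlib

open PowerSeries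

/-- A formal deformation `(A⟦ν⟧, ⋆)` of an associative unital `R`-algebra `A`:
an `R⟦ν⟧`-bilinear, associative, unital (with unit the constant series `1`)
multiplication `⋆` on the `R⟦ν⟧`-module `A⟦ν⟧`, such that `a ⋆ b ≡ a * b (mod ν·A⟦ν⟧)`
for all `a, b : A` (viewed as constant power series).  The `R⟦ν⟧`-module structure on
`A⟦ν⟧` is given by `c • P = (map (algebraMap R A) c) * P`. -/
structure FormalDeformation (R A : Type*) [CommRing R] [Ring A] [Algebra R A] where
  star : PowerSeries A → PowerSeries A → PowerSeries A
  add_star : ∀ P Q S, star (P + Q) S = star P S + star Q S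
  star_add : ∀ P Q S, star P (Q + S) = star P Q + star P S
  smul_star : ∀ (c : PowerSeries R) (P Q : PowerSeries A),
      star (PowerSeries.map (algebraMap R A) c * P) Q
        = PowerSeries.map (algebraMap R A) c * star P Q
  star_smul : ∀ (c : PowerSeries R) (P Q : PowerSeries A),
      star P (PowerSeries.map (algebraMap R A) c * Q)
        = PowerSeries.map (algebraMap R A) c * star P Q
  star_assoc : ∀ P Q S, star (star P Q) S = star P (star Q S)
  one_star : ∀ P, star 1 P = P
  star_one : ∀ P, star P 1 = P
  star_deform : ∀ a b : A,
      constantCoeff (R := A) (star (C (R := A) a) (C (R := A) b)) = a * b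

namespace FormalDeformation

variable {R A : Type*} [CommRing R] [Ring A] [Algebra R A]

/-- `(a,b)ᵢ` : the coefficient of `νⁱ` in `a ⋆ b`, for `a b : A`. -/
noncomputable def prodCoeff (D : FormalDeformation R A) (i : ℕ) (a b : A) : A :=
  coeff (R := A) i (D.star (C (R := A) a) (C (R := A) b))

/-- `{a,b}ᵢ` : the coefficient of `νⁱ` in `a ⋆ b − b ⋆ a`, for `a b : A`. -/
noncomputable def brkt (D : FormalDeformation R A) (i : ℕ) (a b : A) : A :=
  coeff (R := A) i (D.star (C (R := A) a) (C (R := A) b) - D.star (C (R := A) b) (C (R := A) a))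

end FormalDeformation

/-- `H_ν = Z(A) + ν·A⟦ν⟧` : the power series whose constant term is central in `A`. -/
def Hnu (A : Type*) [Ring A] : Set (PowerSeries A) :=
  {P | constantCoeff (R := A) P ∈ Set.center A}

/-- `ν·H_ν` : the power series with vanishing constant term whose `ν`-coefficient is central. -/
def nuHnu (A : Type*) [Ring A] : Set (PowerSeries A) :=
  {P | coeff (R := A) 0 P = 0 ∧ coeff (R := A) 1 P ∈ Set.center A}

/-- `ν²·H_ν` : the power series with vanishing coefficients in degrees `0, 1` whose
`ν²`-coefficient is central. -/
def nu2Hnu (A : Type*) [Ring A] : Set (PowerSeries A) :=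
  {P | coeff (R := A) 0 P = 0 ∧ coeff (R := A) 1 P = 0 ∧ coeff (R := A) 2 P ∈ Set.center A}

/-!
Write `P = C p + ν·P'`. Because `⋆` is `ν`-bilinear and deforms the product of `A`, the constant
term of `P ⋆ Q` is `p q`; so for `P, Q ∈ H_ν` the commutator `[P, Q]_⋆` has no constant term and
its `ν`-coefficient is `{p, q}₁`. For central `z`, associativity makes `δ = {z, ·}₁` a derivation
of `A`, and comparing `δ (w c) = δ (c w)` for central `w` shows that `δ w` is central. Parts (b)
and (c) follow by pulling the factor `ν` out of `Q = ν·Q'`.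
-/

section Filtration

variable {A : Type*} [Ring A]

lemma X_mul_mem_nuHnu_iff {P : PowerSeries A} : X * P ∈ nuHnu A ↔ P ∈ Hnu A := by
  simp [nuHnu, Hnu, coeff_succ_X_mul 0 P]

lemma X_mul_mem_nu2Hnu_iff {P : PowerSeries A} : X * P ∈ nu2Hnu A ↔ P ∈ nuHnu A := by
  simp [nu2Hnu, nuHnu, coeff_succ_X_mul 0 P, coeff_succ_X_mul 1 P]

lemma exists_X_mul_of_mem_nuHnu {P : PowerSeries A} (hP : P ∈ nuHnu A) :
    ∃ Q ∈ Hnu A, P = X * Q := by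
  obtain ⟨Q, rfl⟩ := X_dvd_iff.mpr (by simpa using hP.1)
  exact ⟨Q, X_mul_mem_nuHnu_iff.mp hP, rfl⟩

end Filtration

namespace FormalDeformation

variable {R A : Type*} [CommRing R] [Ring A] [Algebra R A] (D : FormalDeformation R A)

def comm (P Q : PowerSeries A) : PowerSeries A := D.star P Q - D.star Q P

lemma sub_star (P Q S : PowerSeries A) : D.star (P - Q) S = D.star P S - D.star Q S :=
  (AddMonoidHom.mk' (D.star · S) (D.add_star · · S)).map_sub P Q

lemma star_sub (P Q S : PowerSeries A) : D.star P (Q - S) = D.star P Q - D.star P S :=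
  (AddMonoidHom.mk' (D.star P) (D.star_add P)).map_sub Q S

lemma X_mul_star (P Q : PowerSeries A) : D.star (X * P) Q = X * D.star P Q := by
  simpa using D.smul_star X P Q

lemma star_X_mul (P Q : PowerSeries A) : D.star P (X * Q) = X * D.star P Q := by
  simpa using D.star_smul X P Q

lemma constantCoeff_star (P Q : PowerSeries A) :
    constantCoeff (D.star P Q) = constantCoeff P * constantCoeff Q := by
  rw [eq_X_mul_shift_add_const P, eq_X_mul_shift_add_const Q]
  simp [D.add_star, D.star_add, D.X_mul_star, D.star_X_mul, D.star_deform]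

lemma star_mem_Hnu {P Q : PowerSeries A} (hP : P ∈ Hnu A) (hQ : Q ∈ Hnu A) :
    D.star P Q ∈ Hnu A := by
  show constantCoeff (D.star P Q) ∈ Set.center A
  rw [constantCoeff_star]
  exact Set.mul_mem_center hP hQ

lemma coeff_one_star_of_constantCoeff_eq_zero_left {U : PowerSeries A} (hU : constantCoeff U = 0)
    (Q : PowerSeries A) : coeff 1 (D.star U Q) = coeff 1 U * constantCoeff Q := by
  obtain ⟨U, rfl⟩ := X_dvd_iff.mpr hU
  simp [D.X_mul_star, coeff_succ_X_mul 0, constantCoeff_star]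

lemma coeff_one_star_of_constantCoeff_eq_zero_right {U : PowerSeries A} (hU : constantCoeff U = 0)
    (P : PowerSeries A) : coeff 1 (D.star P U) = constantCoeff P * coeff 1 U := by
  obtain ⟨U, rfl⟩ := X_dvd_iff.mpr hU
  simp [D.star_X_mul, coeff_succ_X_mul 0, constantCoeff_star]

lemma comm_add_left (P P' Q : PowerSeries A) : D.comm (P + P') Q = D.comm P Q + D.comm P' Q := by
  simp only [comm, D.add_star, D.star_add]; abel

lemma comm_add_right (P Q Q' : PowerSeries A) : D.comm P (Q + Q') = D.comm P Q + D.comm P Q' := by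
  simp only [comm, D.add_star, D.star_add]; abel

lemma comm_X_mul_left (P Q : PowerSeries A) : D.comm (X * P) Q = X * D.comm P Q := by
  simp only [comm, D.X_mul_star, D.star_X_mul, mul_sub]

lemma comm_X_mul_right (P Q : PowerSeries A) : D.comm P (X * Q) = X * D.comm P Q := by
  simp only [comm, D.X_mul_star, D.star_X_mul, mul_sub]

lemma comm_star (P Q S : PowerSeries A) :
    D.comm P (D.star Q S) = D.star (D.comm P Q) S + D.star Q (D.comm P S) := by
  simp only [comm, D.sub_star, D.star_sub, D.star_assoc]; abel

lemma constantCoeff_comm {P Q : PowerSeries A} (h : Commute (constantCoeff P) (constantCoeff Q)) :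
    constantCoeff (D.comm P Q) = 0 := by
  simp [comm, constantCoeff_star, h.eq]

lemma coeff_one_comm_C_left {z : A} (hz : z ∈ Set.center A) (Q : PowerSeries A) :
    coeff 1 (D.comm (C z) Q) = D.brkt 1 z (constantCoeff Q) := by
  rw [eq_X_mul_shift_add_const Q, D.comm_add_right, D.comm_X_mul_right, map_add, coeff_succ_X_mul 0,
    coeff_zero_eq_constantCoeff_apply, D.constantCoeff_comm (by simpa using hz.comm _)]
  simp [comm, brkt]

lemma coeff_one_comm {P Q : PowerSeries A} (hP : P ∈ Hnu A) (hQ : Q ∈ Hnu A) :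
    coeff 1 (D.comm P Q) = D.brkt 1 (constantCoeff P) (constantCoeff Q) := by
  rw [eq_X_mul_shift_add_const P, D.comm_add_left, D.comm_X_mul_left, map_add, coeff_succ_X_mul 0,
    coeff_zero_eq_constantCoeff_apply, D.constantCoeff_comm ((hQ.comm _).symm),
    D.coeff_one_comm_C_left hP]
  simp

lemma brkt_one_mul {z : A} (hz : z ∈ Set.center A) (b c : A) :
    D.brkt 1 z (b * c) = D.brkt 1 z b * c + b * D.brkt 1 z c := by
  have key := congrArg (coeff 1) (D.comm_star (C z) (C b) (C c))
  have hb : constantCoeff (D.comm (C z) (C b)) = 0 :=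
    D.constantCoeff_comm (by simpa using hz.comm b)
  have hc : constantCoeff (D.comm (C z) (C c)) = 0 :=
    D.constantCoeff_comm (by simpa using hz.comm c)
  rw [D.coeff_one_comm_C_left hz, D.constantCoeff_star, map_add,
    D.coeff_one_star_of_constantCoeff_eq_zero_left hb,
    D.coeff_one_star_of_constantCoeff_eq_zero_right hc] at key
  simp only [constantCoeff_C] at key
  exact key

lemma brkt_one_mem_center {z w : A} (hz : z ∈ Set.center A) (hw : w ∈ Set.center A) :
    D.brkt 1 z w ∈ Set.center A := by
  refine Semigroup.mem_center_iff.mpr fun c => ?_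
  have h := D.brkt_one_mul hz c w
  rw [← (hw.comm c).eq, D.brkt_one_mul hz, ← (hw.comm (D.brkt 1 z c)).eq, add_comm] at h
  exact (add_left_cancel h).symm

lemma comm_mem_nuHnu {P Q : PowerSeries A} (hP : P ∈ Hnu A) (hQ : Q ∈ Hnu A) :
    D.comm P Q ∈ nuHnu A := by
  refine ⟨by simpa using D.constantCoeff_comm (hP.comm _), ?_⟩
  rw [D.coeff_one_comm hP hQ]
  exact D.brkt_one_mem_center hP hQ

end FormalDeformation

/-- (a) the `⋆`-commutator of two elements of `H_ν` lies in `ν·H_ν`;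
(b) `ν·H_ν` is a two-sided ideal of `(H_ν, ⋆)`;
(c) for `P ∈ H_ν` and `Q ∈ ν·H_ν` the commutator `P⋆Q − Q⋆P` lies in `ν²·H_ν`.
(These are the conditions making `H_ν/νH_ν`, with product induced by `⋆` and bracket
induced by `(1/ν)[·,·]_⋆`, a commutative Poisson algebra.) -/
theorem nuHnu_poisson_ideal {R A : Type*} [CommRing R] [Ring A] [Algebra R A]
    (D : FormalDeformation R A) :
    (∀ P Q : PowerSeries A, P ∈ Hnu A → Q ∈ Hnu A →
      D.star P Q - D.star Q P ∈ nuHnu A) ∧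
    (∀ P Q : PowerSeries A, P ∈ Hnu A → Q ∈ nuHnu A →
      D.star P Q ∈ nuHnu A ∧ D.star Q P ∈ nuHnu A) ∧
    (∀ P Q : PowerSeries A, P ∈ Hnu A → Q ∈ nuHnu A →
      D.star P Q - D.star Q P ∈ nu2Hnu A) := by
  refine ⟨fun P Q hP hQ => D.comm_mem_nuHnu hP hQ, fun P Q hP hQ => ?_, fun P Q hP hQ => ?_⟩
  · obtain ⟨Q', hQ', rfl⟩ := exists_X_mul_of_mem_nuHnu hQ
    rw [D.star_X_mul, D.X_mul_star, X_mul_mem_nuHnu_iff, X_mul_mem_nuHnu_iff]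
    exact ⟨D.star_mem_Hnu hP hQ', D.star_mem_Hnu hQ' hP⟩
  · obtain ⟨Q', hQ', rfl⟩ := exists_X_mul_of_mem_nuHnu hQ
    change D.comm P (X * Q') ∈ nu2Hnu A
    rw [D.comm_X_mul_right, X_mul_mem_nu2Hnu_iff]
    exact D.comm_mem_nuHnu hP hQ'
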